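/- Under the stated setup, let I ⊆ A be an ideal and a ∈ A. Then the following are equivalent: (1) (D_{i_1} ∘ ⋯ ∘ D_{i_m})(a) ∈ I for all m ≥ 0 and all i_1,…,i_m ∈ {1,…,n} (the case m = 0 meaning a ∈ I); (2) the composite map A → H ⊗_k A → H ⊗_k (A/I), given by φ followed by the quotient in the second factor, sends a to zero. -/

import Mathlib

/-!
Let `T_i : H → H` send `p` to the `u^{e_i}`-coefficient of the first factor of `μ p`. Since `μ`
is multiplicative and `(ε ⊗ id) ∘ μ = id`, each `T_i` is a derivation, and `(id ⊗ ε) ∘ μ = id`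
says that `T_i` agrees with `∂/∂u_i` at the origin. Coassociativity of `φ` gives
`φ ∘ D_i = (T_i ⊗ id) ∘ φ`, and the counit of `φ` recovers `f` as the `u^0`-coefficient of `φ f`.
So the elements `D_l a mod I` are the `u^0`-coefficients of `(T_l ⊗ id)(φ a mod I)`, which gives
(2) ⇒ (1) at once.

For (1) ⇒ (2), write `T_i = ∂_i + Σ_j (T_i u_j - δ_ij) ∂_j`: the error term does not lower the
order of vanishing at the origin. Hence, for `|l| = |β|`, the constant term of `T_l (u^β)` equals
that of `∂_l (u^β)`, a positive integer if `β` is the multi-index of `l` and `0` otherwise, and it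
vanishes when `|β| > |l|`. Thus the `D_l a mod I` form a triangular system, with diagonal entries
invertible in characteristic zero, in the coefficients of `φ a mod I`, which must therefore vanish.
-/

open TensorProduct

noncomputable section

variable {k : Type*} [Field k] {n : ℕ}
variable {A : Type*} [CommRing A] [Algebra k A]

/-- The coefficient-extraction linear map `k[u₁,…,u_n] → k`. -/
def lcoeffMv (k : Type*) [CommSemiring k] {n : ℕ} (β : Fin n →₀ ℕ) :
    MvPolynomial (Fin n) k →ₗ[k] k where
  toFun p := MvPolynomial.coeff β p
  map_add' p q := MvPolynomial.coeff_add β p q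
  map_smul' c p := by simp [MvPolynomial.coeff_smul]

/-- Evaluation at `u = 0`, a `k`-algebra map `k[u₁,…,u_n] → k`. -/
def evalZero (k : Type*) [CommSemiring k] (n : ℕ) : MvPolynomial (Fin n) k →ₐ[k] k :=
  MvPolynomial.aeval 0

/-- Extraction of the coefficient of `u^α` in the first tensor factor:
for `φ(f) = Σ_α u^α ⊗ f_α`, this sends `φ(f)` to `f_α`. -/
def coeffFst (k : Type*) [Field k] {n : ℕ} (A : Type*) [CommRing A] [Algebra k A]
    (α : Fin n →₀ ℕ) : (MvPolynomial (Fin n) k ⊗[k] A) →ₗ[k] A :=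
  (TensorProduct.lid k A).toLinearMap ∘ₗ TensorProduct.map (lcoeffMv k α) LinearMap.id

/-- The operator `D_i : A → A`, `f ↦ f_{e_i}`. -/
def Dop (φ : A →ₐ[k] MvPolynomial (Fin n) k ⊗[k] A) (i : Fin n) (f : A) : A :=
  coeffFst k A (Finsupp.single i 1) (φ f)

namespace MvPolynomial

variable {σ R : Type*} [CommRing R]

theorem constantCoeff_pderiv (i : σ) (p : MvPolynomial σ R) :
    constantCoeff (pderiv i p) = coeff (Finsupp.single i 1) p := by
  simp [constantCoeff_eq, coeff_pderiv]

theorem coeff_single_one_mul (i : σ) (p q : MvPolynomial σ R) :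
    coeff (Finsupp.single i 1) (p * q) =
      coeff (Finsupp.single i 1) p * coeff 0 q + coeff 0 p * coeff (Finsupp.single i 1) q := by
  have := congrArg constantCoeff (pderiv_mul (i := i) (f := p) (g := q))
  simp only [map_add, map_mul, constantCoeff_pderiv, constantCoeff_eq] at this
  rw [this]

theorem mem_idealOfVars_iff {p : MvPolynomial σ R} :
    p ∈ idealOfVars σ R ↔ constantCoeff p = 0 := by
  rw [← pow_one (idealOfVars σ R), mem_pow_idealOfVars_iff']
  simp [Finsupp.degree_eq_zero_iff, constantCoeff_eq]

theorem pderiv_mem_pow_idealOfVars (i : σ) {d : ℕ} {p : MvPolynomial σ R}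
    (hp : p ∈ idealOfVars σ R ^ (d + 1)) : pderiv i p ∈ idealOfVars σ R ^ d := by
  rw [mem_pow_idealOfVars_iff'] at hp ⊢
  intro x hx
  rw [coeff_pderiv, hp _ (by simpa using hx), zero_mul]

theorem derivation_apply_eq_sum [Fintype σ]
    (D : Derivation R (MvPolynomial σ R) (MvPolynomial σ R)) (p : MvPolynomial σ R) :
    D p = ∑ j, D (X j) * pderiv j p := by
  classical
  have hsum : ∀ q, (∑ j, D (X j) • pderiv j) q = ∑ j, D (X j) * pderiv j q := fun q => by
    rw [← Derivation.coeFnAddMonoidHom_apply, map_sum, Finset.sum_apply]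
    rfl
  have : D = ∑ j, D (X j) • pderiv j :=
    derivation_ext fun i => by simp [hsum, pderiv_X, Pi.single_apply]
  rw [← hsum, ← this]

theorem derivation_mem_pow_idealOfVars [Fintype σ]
    {D : Derivation R (MvPolynomial σ R) (MvPolynomial σ R)}
    (hD : ∀ j, constantCoeff (D (X j)) = 0) {d : ℕ} {p : MvPolynomial σ R}
    (hp : p ∈ idealOfVars σ R ^ d) : D p ∈ idealOfVars σ R ^ d := by
  cases d with
  | zero => simp
  | succ d =>
    rw [derivation_apply_eq_sum, pow_succ']
    exact Ideal.sum_mem _ fun j _ =>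
      Ideal.mul_mem_mul (mem_idealOfVars_iff.2 (hD j)) (pderiv_mem_pow_idealOfVars j hp)

section Iterate

local notation "𝔪" => idealOfVars σ R

theorem prod_map_apply_mem_pow_idealOfVars {E : σ → Module.End R (MvPolynomial σ R)}
    (hE : ∀ i d p, p ∈ 𝔪 ^ (d + 1) → E i p ∈ 𝔪 ^ d)
    (l : List σ) {m : ℕ} {p : MvPolynomial σ R} (hp : p ∈ 𝔪 ^ (m + l.length)) :
    (l.map E).prod p ∈ 𝔪 ^ m := by
  induction l generalizing m with
  | nil => simpa using hp
  | cons i l ih =>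
    rw [List.length_cons, ← add_assoc, add_right_comm] at hp
    exact hE i m _ (ih hp)

theorem derivation_mem_pow_idealOfVars_of_constantCoeff_eq [Fintype σ]
    {D : Derivation R (MvPolynomial σ R) (MvPolynomial σ R)} {i : σ}
    (hD : ∀ j, constantCoeff (D (X j)) = constantCoeff (pderiv i (X j)))
    {d : ℕ} {p : MvPolynomial σ R} (hp : p ∈ 𝔪 ^ (d + 1)) : D p ∈ 𝔪 ^ d := by
  have hsub : D p - pderiv i p ∈ 𝔪 ^ (d + 1) :=
    derivation_mem_pow_idealOfVars (D := D - pderiv i) (fun j => by simp [hD]) hp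
  simpa using Ideal.add_mem _ (Ideal.pow_le_pow_right d.le_succ hsub)
    (pderiv_mem_pow_idealOfVars i hp)

theorem prod_map_derivation_sub_prod_map_pderiv_mem [Fintype σ]
    {D : σ → Derivation R (MvPolynomial σ R) (MvPolynomial σ R)}
    (hD : ∀ i j, constantCoeff (D i (X j)) = constantCoeff (pderiv i (X j)))
    (l : List σ) {m : ℕ} {p : MvPolynomial σ R} (hp : p ∈ 𝔪 ^ (m + l.length)) :
    (l.map fun i => (D i).toLinearMap).prod p - (l.map fun i => (pderiv i).toLinearMap).prod p
      ∈ 𝔪 ^ (m + 1) := by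
  induction l generalizing m with
  | nil => simp
  | cons i l ih =>
    rw [List.length_cons, ← add_assoc, add_right_comm] at hp
    set q := (l.map fun i => (D i).toLinearMap).prod p
    set r := (l.map fun i => (pderiv i).toLinearMap).prod p
    have hr : r ∈ 𝔪 ^ (m + 1) :=
      prod_map_apply_mem_pow_idealOfVars (fun i _ _ => pderiv_mem_pow_idealOfVars i) l hp
    have key : D i q - pderiv i r = D i (q - r) + (D i r - pderiv i r) := by
      rw [map_sub]; abel
    simp only [List.map_cons, List.prod_cons, Module.End.mul_apply, Derivation.coeFn_coe]
    rw [key]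
    exact Ideal.add_mem _ (derivation_mem_pow_idealOfVars_of_constantCoeff_eq (hD i) (ih hp))
      (derivation_mem_pow_idealOfVars (D := D i - pderiv i) (fun j => by simp [hD]) hr)

theorem exists_coeff_prod_map_pderiv [DecidableEq σ] (l : List σ) (τ : σ →₀ ℕ) :
    ∃ w : ℕ, 0 < w ∧ ∀ p : MvPolynomial σ R,
      coeff τ ((l.map fun i => (pderiv i).toLinearMap).prod p) =
        w * coeff (τ + Multiset.toFinsupp l) p := by
  induction l generalizing τ with
  | nil => exact ⟨1, one_pos, fun p => by simp⟩
  | cons i l ih =>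
    obtain ⟨w, hw, hcoeff⟩ := ih (τ + Finsupp.single i 1)
    refine ⟨w * (τ i + 1), by positivity, fun p => ?_⟩
    simp only [List.map_cons, List.prod_cons, Module.End.mul_apply, Derivation.coeFn_coe,
      coeff_pderiv, hcoeff, ← Multiset.cons_coe, ← Multiset.singleton_add,
      Multiset.toFinsupp_add, Multiset.toFinsupp_singleton, add_assoc]
    push_cast
    ring

theorem constantCoeff_prod_map_derivation_eq_zero [Fintype σ]
    {D : σ → Derivation R (MvPolynomial σ R) (MvPolynomial σ R)}
    (hD : ∀ i j, constantCoeff (D i (X j)) = constantCoeff (pderiv i (X j)))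
    (l : List σ) {p : MvPolynomial σ R} (hp : p ∈ 𝔪 ^ (l.length + 1)) :
    constantCoeff ((l.map fun i => (D i).toLinearMap).prod p) = 0 := by
  rw [add_comm] at hp
  exact mem_idealOfVars_iff.1 (pow_one 𝔪 ▸ prod_map_apply_mem_pow_idealOfVars
    (fun i _ _ => derivation_mem_pow_idealOfVars_of_constantCoeff_eq (hD i)) l hp)

theorem exists_constantCoeff_prod_map_derivation [Fintype σ] [DecidableEq σ]
    {D : σ → Derivation R (MvPolynomial σ R) (MvPolynomial σ R)}
    (hD : ∀ i j, constantCoeff (D i (X j)) = constantCoeff (pderiv i (X j))) (l : List σ) :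
    ∃ w : ℕ, 0 < w ∧ ∀ p ∈ 𝔪 ^ l.length,
      constantCoeff ((l.map fun i => (D i).toLinearMap).prod p) =
        w * coeff (Multiset.toFinsupp l) p := by
  obtain ⟨w, hw, hcoeff⟩ := exists_coeff_prod_map_pderiv (R := R) l 0
  refine ⟨w, hw, fun p hp => ?_⟩
  rw [← zero_add l.length] at hp
  have hsub := mem_idealOfVars_iff.1
    (pow_one 𝔪 ▸ prod_map_derivation_sub_prod_map_pderiv_mem hD l hp)
  rw [map_sub, sub_eq_zero] at hsub
  rw [hsub, constantCoeff_eq, hcoeff, zero_add]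

end Iterate

end MvPolynomial

theorem Finsupp.eq_zero_of_triangular {K ι M : Type*} [Field K] [AddCommGroup M] [Module K M]
    (deg : ι → ℕ) (c : ι → ι → K) (hc : ∀ α β, α ≠ β → deg α ≤ deg β → c α β = 0)
    (hdiag : ∀ α, c α α ≠ 0) (b : ι →₀ M)
    (hb : ∀ α, (b.sum fun β x => c α β • x) = 0) :
    b = 0 := by
  refine Finsupp.ext fun α => ?_
  rw [Finsupp.coe_zero, Pi.zero_apply]
  induction h : deg α using Nat.strong_induction_on generalizing α with
  | _ d ih =>
    have hα := hb α
    rw [Finsupp.sum_eq_single (g := fun β x => c α β • x) α (fun β _ hβα => ?_)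
      (fun _ => smul_zero _)] at hα
    · exact (smul_eq_zero.1 hα).resolve_left (hdiag α)
    · rcases lt_or_ge (deg β) d with hlt | hle
      · rw [ih _ hlt β rfl, smul_zero]
      · rw [hc α β hβα.symm (h ▸ hle), zero_smul]

open MvPolynomial

section Coaction

variable {B C : Type*} [CommRing B] [Algebra k B] [CommRing C] [Algebra k C]

local notation "H" => MvPolynomial (Fin n) k

@[simp]
theorem coeffFst_tmul (α : Fin n →₀ ℕ) (p : H) (b : B) :
    coeffFst k B α (p ⊗ₜ b) = coeff α p • b :=
  rfl

theorem coeffFst_single_one_mul (i : Fin n) (x y : H ⊗[k] B) :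
    coeffFst k B (Finsupp.single i 1) (x * y) =
      coeffFst k B (Finsupp.single i 1) x * coeffFst k B 0 y +
        coeffFst k B 0 x * coeffFst k B (Finsupp.single i 1) y := by
  induction x with
  | zero => simp
  | add x x' hx hx' => simp only [add_mul, map_add, hx, hx']; ring
  | tmul p b =>
    induction y with
    | zero => simp
    | add y y' hy hy' => simp only [mul_add, map_add, hy, hy']; ring
    | tmul q c =>
      simp only [Algebra.TensorProduct.tmul_mul_tmul, coeffFst_tmul, coeff_single_one_mul,
        Algebra.smul_def, map_add, map_mul]
      ring

theorem coeffFst_map (g : B →ₐ[k] C) (α : Fin n →₀ ℕ) (t : H ⊗[k] B) :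
    coeffFst k C α (Algebra.TensorProduct.map (AlgHom.id k H) g t) = g (coeffFst k B α t) := by
  induction t with
  | zero => simp
  | tmul p b => simp
  | add x y hx hy => simp [hx, hy]

theorem lid_map_evalZero (t : H ⊗[k] B) :
    Algebra.TensorProduct.lid k B (Algebra.TensorProduct.map (evalZero k n) (AlgHom.id k B) t) =
      coeffFst k B 0 t := by
  induction t with
  | zero => simp
  | tmul p b => simp [evalZero, constantCoeff_eq]
  | add x y hx hy => simp [hx, hy]

theorem coeff_rid_map_evalZero (α : Fin n →₀ ℕ) (x : H ⊗[k] H) :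
    coeff α (Algebra.TensorProduct.rid k k H
      (Algebra.TensorProduct.map (AlgHom.id k H) (evalZero k n) x)) =
      constantCoeff (coeffFst k H α x) := by
  induction x with
  | zero => simp
  | tmul p q => simp [evalZero, constantCoeff_eq, mul_comm]
  | add x y hx hy => simp [hx, hy]

theorem coeffFst_assoc_map (μ : H →ₐ[k] H ⊗[k] H) (γ : Fin n →₀ ℕ) (t : H ⊗[k] B) :
    coeffFst k (H ⊗[k] B) γ (Algebra.TensorProduct.assoc k k k H H B
        (Algebra.TensorProduct.map μ (AlgHom.id k B) t)) =
      LinearMap.rTensor B (coeffFst k H γ ∘ₗ μ.toLinearMap) t := by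
  have hassoc (x : H ⊗[k] H) (b : B) :
      coeffFst k (H ⊗[k] B) γ (Algebra.TensorProduct.assoc k k k H H B (x ⊗ₜ b)) =
        coeffFst k H γ x ⊗ₜ b := by
    induction x with
    | zero => simp
    | tmul p q => simp [smul_tmul']
    | add x y hx hy => simp [add_tmul, hx, hy]
  induction t with
  | zero => simp
  | tmul p b => simp [hassoc]
  | add x y hx hy => simp [hx, hy]

theorem map_rTensor (g : B →ₐ[k] C) (L : Module.End k H) (t : H ⊗[k] B) :
    Algebra.TensorProduct.map (AlgHom.id k H) g (LinearMap.rTensor B L t) =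
      LinearMap.rTensor C L (Algebra.TensorProduct.map (AlgHom.id k H) g t) := by
  induction t with
  | zero => simp
  | tmul p b => simp
  | add x y hx hy => simp [hx, hy]

theorem eq_zero_of_forall_coeffFst_zero_rTensor [CharZero k] {D : Fin n → Derivation k H H}
    (hD : ∀ i j, constantCoeff (D i (X j)) = constantCoeff (pderiv i (X j))) (t : H ⊗[k] B)
    (ht : ∀ l : List (Fin n),
      coeffFst k B 0 (LinearMap.rTensor B (l.map fun i => (D i).toLinearMap).prod t) = 0) :
    t = 0 := by
  classical
  obtain ⟨b, rfl⟩ := TensorProduct.eq_repr_basis_left (basisMonomials (Fin n) k) t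
  suffices b = 0 by simp [this]
  let path (α : Fin n →₀ ℕ) : List (Fin n) := (Finsupp.toMultiset α).toList
  have path_toFinsupp (α) : Multiset.toFinsupp (path α : Multiset (Fin n)) = α := by
    simp [path]
  have path_length (α) : (path α).length = α.degree := by
    simp [path, Finsupp.card_toMultiset, Finsupp.degree_apply, Finsupp.sum]
  let c (α β : Fin n →₀ ℕ) : k :=
    constantCoeff (((path α).map fun i => (D i).toLinearMap).prod (monomial β 1))
  have hc_eq (α β) (h : β.degree = α.degree) :
      ∃ w : ℕ, 0 < w ∧ c α β = w * coeff α (monomial β 1) := by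
    obtain ⟨w, hw, hcoeff⟩ := exists_constantCoeff_prod_map_derivation hD (path α)
    refine ⟨w, hw, ?_⟩
    have := hcoeff _
      ((monomial_mem_pow_idealOfVars_iff _ _ one_ne_zero).2 (by rw [path_length, h]))
    rwa [path_toFinsupp] at this
  refine Finsupp.eq_zero_of_triangular Finsupp.degree c (fun α β hne hle => ?_) (fun α => ?_) b
    fun α => by simpa [map_finsuppSum, c, constantCoeff_eq] using ht (path α)
  · rcases hle.lt_or_eq with hlt | heq
    · exact constantCoeff_prod_map_derivation_eq_zero hD _
        ((monomial_mem_pow_idealOfVars_iff _ _ one_ne_zero).2 (by rw [path_length]; omega))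
    · obtain ⟨w, -, hw⟩ := hc_eq α β heq.symm
      rw [hw, coeff_monomial, if_neg (Ne.symm hne), mul_zero]
  · obtain ⟨w, hw, hcw⟩ := hc_eq α α rfl
    rw [hcw, coeff_monomial, if_pos rfl, mul_one]
    exact Nat.cast_ne_zero.2 hw.ne'

def coproductDerivation (μ : H →ₐ[k] H ⊗[k] H) (hμ : ∀ p, coeffFst k H 0 (μ p) = p)
    (i : Fin n) : Derivation k H H :=
  Derivation.mk' (coeffFst k H (Finsupp.single i 1) ∘ₗ μ.toLinearMap) fun p q => by
    simp only [LinearMap.comp_apply, AlgHom.toLinearMap_apply, map_mul, coeffFst_single_one_mul,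
      hμ, smul_eq_mul]
    ring

theorem constantCoeff_coproductDerivation {μ : H →ₐ[k] H ⊗[k] H}
    (hμ : ∀ p, coeffFst k H 0 (μ p) = p)
    (hμ' : ∀ p, Algebra.TensorProduct.rid k k H
      (Algebra.TensorProduct.map (AlgHom.id k H) (evalZero k n) (μ p)) = p)
    (i : Fin n) (p : H) :
    constantCoeff (coproductDerivation μ hμ i p) = constantCoeff (pderiv i p) := by
  rw [constantCoeff_pderiv, ← hμ' p, coeff_rid_map_evalZero, hμ' p]
  rfl

section Coassociative

variable {μ : MvPolynomial (Fin n) k →ₐ[k] MvPolynomial (Fin n) k ⊗[k] MvPolynomial (Fin n) k}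
  (hμ : ∀ p, coeffFst k (MvPolynomial (Fin n) k) 0 (μ p) = p)
  {φ : A →ₐ[k] MvPolynomial (Fin n) k ⊗[k] A}
  (hφ : ∀ f, Algebra.TensorProduct.assoc k k k (MvPolynomial (Fin n) k) (MvPolynomial (Fin n) k)
      A (Algebra.TensorProduct.map μ (AlgHom.id k A) (φ f)) =
    Algebra.TensorProduct.map (AlgHom.id k (MvPolynomial (Fin n) k)) φ (φ f))
include hφ

theorem coaction_Dop (i : Fin n) (f : A) :
    φ (Dop φ i f) = LinearMap.rTensor A (coproductDerivation μ hμ i).toLinearMap (φ f) := by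
  rw [Dop, ← coeffFst_map φ, ← hφ f, coeffFst_assoc_map]
  rfl

theorem map_coaction_foldr_Dop (g : A →ₐ[k] C) (l : List (Fin n)) (a : A) :
    Algebra.TensorProduct.map (AlgHom.id k H) g (φ (l.foldr (fun i x => Dop φ i x) a)) =
      LinearMap.rTensor C (l.map fun i => (coproductDerivation μ hμ i).toLinearMap).prod
        (Algebra.TensorProduct.map (AlgHom.id k H) g (φ a)) := by
  induction l with
  | nil => simp [Module.End.one_eq_id]
  | cons i l ih =>
    rw [List.foldr_cons, coaction_Dop hμ hφ, map_rTensor, ih, List.map_cons, List.prod_cons,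
      LinearMap.rTensor_mul, Module.End.mul_apply]

end Coassociative

end Coaction

theorem statement18 [CharZero k]
    (μ : MvPolynomial (Fin n) k →ₐ[k] MvPolynomial (Fin n) k ⊗[k] MvPolynomial (Fin n) k)
    (hμ1 : ∀ p : MvPolynomial (Fin n) k,
      Algebra.TensorProduct.lid k (MvPolynomial (Fin n) k)
        (Algebra.TensorProduct.map (evalZero k n) (AlgHom.id k (MvPolynomial (Fin n) k)) (μ p)) = p)
    (hμ2 : ∀ p : MvPolynomial (Fin n) k,
      Algebra.TensorProduct.rid k k (MvPolynomial (Fin n) k)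
        (Algebra.TensorProduct.map (AlgHom.id k (MvPolynomial (Fin n) k)) (evalZero k n) (μ p)) = p)
    (φ : A →ₐ[k] MvPolynomial (Fin n) k ⊗[k] A)
    (hφ1 : ∀ f : A,
      Algebra.TensorProduct.lid k A
        (Algebra.TensorProduct.map (evalZero k n) (AlgHom.id k A) (φ f)) = f)
    (hφ2 : ∀ f : A,
      Algebra.TensorProduct.assoc k k k (MvPolynomial (Fin n) k) (MvPolynomial (Fin n) k) A
          (Algebra.TensorProduct.map μ (AlgHom.id k A) (φ f)) =
        Algebra.TensorProduct.map (AlgHom.id k (MvPolynomial (Fin n) k)) φ (φ f))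
    (I : Ideal A) (a : A) :
    (∀ l : List (Fin n), l.foldr (fun i x => Dop φ i x) a ∈ I) ↔
      Algebra.TensorProduct.map (AlgHom.id k (MvPolynomial (Fin n) k))
        (Ideal.Quotient.mkₐ k I) (φ a) = 0 := by
  have hμ (p) : coeffFst k _ 0 (μ p) = p := (lid_map_evalZero _).symm.trans (hμ1 p)
  set ψ :=
    Algebra.TensorProduct.map (AlgHom.id k (MvPolynomial (Fin n) k)) (Ideal.Quotient.mkₐ k I)
  have hcounit (f : A) : Ideal.Quotient.mk I f = coeffFst k (A ⧸ I) 0 (ψ (φ f)) := by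
    rw [coeffFst_map, ← lid_map_evalZero, hφ1]
    rfl
  constructor
  · intro h
    refine eq_zero_of_forall_coeffFst_zero_rTensor
      (fun i j => constantCoeff_coproductDerivation hμ hμ2 i (X j)) _ fun l => ?_
    rw [← map_coaction_foldr_Dop hμ hφ2, ← hcounit]
    exact Ideal.Quotient.eq_zero_iff_mem.2 (h l)
  · intro h l
    rw [← Ideal.Quotient.eq_zero_iff_mem, hcounit, map_coaction_foldr_Dop hμ hφ2, h, map_zero,
      map_zero]
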